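/- Let τ be a correct compositional translation from SYNCSIMPLE to LOCKSIMPLE_{k,IS} with k ≥ 1. Then there exists a reduction sequence of the process τ(!) | τ(?) (from the initial store IS) that executes every symbol of both τ(!) and τ(?). -/

import Mathlib

/-- Symbols of SYNCSIMPLE: `!` (bang) and `?` (ques). -/
inductive SSym | bang | ques
deriving DecidableEq

/-- A SYNCSIMPLE subprocess: a string over {!,?} ending with `0` (false) or `✓` (true). -/
abbrev SSub := List SSym × Bool

/-- A SYNCSIMPLE process: a multiset of subprocesses. -/
abbrev SProc := Multiset SSub

/-- The SYS reduction: a leading `!` and a leading `?` of two subprocesses are consumed. -/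
def SysStep (P Q : SProc) : Prop :=
  ∃ (u1 u2 : List SSym) (b1 b2 : Bool) (R : SProc),
    P = (SSym.bang :: u1, b1) ::ₘ (SSym.ques :: u2, b2) ::ₘ R ∧
    Q = (u1, b1) ::ₘ (u2, b2) ::ₘ R

/-- A process is successful if it contains the subprocess `✓`. -/
def SSuccessful (P : SProc) : Prop := (([], true) : SSub) ∈ P

def SMayConv (P : SProc) : Prop :=
  ∃ Q, Relation.ReflTransGen SysStep P Q ∧ SSuccessful Q

def SMustConv (P : SProc) : Prop :=
  ∀ Q, Relation.ReflTransGen SysStep P Q → SMayConv Q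

/-- Lock operations: put `P_i` and take `T_i`. -/
inductive LOp | put | take
deriving DecidableEq

abbrev LSym (k : ℕ) := LOp × Fin k
abbrev LSub (k : ℕ) := List (LSym k) × Bool
abbrev LProc (k : ℕ) := Multiset (LSub k)
/-- The store of `k` locks: `true` = full (■), `false` = empty (□). -/
abbrev Store (k : ℕ) := Fin k → Bool

/-- LOCKSIMPLE step: `P_i` fills an empty lock `i` (blocks if full);
    `T_i` empties lock `i` and never blocks. -/
def LockStep {k : ℕ} : (LProc k × Store k) → (LProc k × Store k) → Prop :=
  fun s t => ∃ (i : Fin k) (u : List (LSym k)) (b : Bool) (R : LProc k),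
    ((s.1 = ((LOp.put, i) :: u, b) ::ₘ R ∧ s.2 i = false ∧
      t.1 = (u, b) ::ₘ R ∧ t.2 = Function.update s.2 i true) ∨
     (s.1 = ((LOp.take, i) :: u, b) ::ₘ R ∧
      t.1 = (u, b) ::ₘ R ∧ t.2 = Function.update s.2 i false))

def LSuccessful {k : ℕ} (s : LProc k × Store k) : Prop := (([], true) : LSub k) ∈ s.1

def LMayConv {k : ℕ} (s : LProc k × Store k) : Prop :=
  ∃ t, Relation.ReflTransGen LockStep s t ∧ LSuccessful t

def LMustConv {k : ℕ} (s : LProc k × Store k) : Prop :=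
  ∀ t, Relation.ReflTransGen LockStep s t → LMayConv t

/-- The compositional translation determined by the strings `tb = τ(!)` and `tq = τ(?)`,
    applied to a subprocess. -/
def transSub {k : ℕ} (tb tq : List (LSym k)) (u : SSub) : LSub k :=
  (u.1.flatMap (fun c => match c with | SSym.bang => tb | SSym.ques => tq), u.2)

/-- The compositional translation applied to a process. -/
def transProc {k : ℕ} (tb tq : List (LSym k)) (P : SProc) : LProc k :=
  P.map (transSub tb tq)

/-- Correctness of the compositional translation `(tb, tq)` with initial store `IS`:
    may- and must-convergence are preserved and reflected. -/
def Correct {k : ℕ} (IS : Store k) (tb tq : List (LSym k)) : Prop :=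
  ∀ P : SProc,
    (SMayConv P ↔ LMayConv (transProc tb tq P, IS)) ∧
    (SMustConv P ↔ LMustConv (transProc tb tq P, IS))

/-- The solo execution of the string `s` from store `IS` reaches the point where
    `(put, i) :: rest` remains and deadlocks there since lock `i` is full. -/
def SoloBlocked {k : ℕ} (IS : Store k) (s : List (LSym k)) (i : Fin k)
    (rest : List (LSym k)) : Prop :=
  ∃ C : Store k,
    Relation.ReflTransGen LockStep (({(s, false)} : LProc k), IS)
      (({((LOp.put, i) :: rest, false)} : LProc k), C) ∧
    C i = true

/-- Blocking type `P_i`: the blocking prefix is `R P_i` with `R` free of `P_i, T_i`. -/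
def BlockingTypeP {k : ℕ} (IS : Store k) (s : List (LSym k)) (i : Fin k) : Prop :=
  ∃ r rest, s = r ++ (LOp.put, i) :: rest ∧ (∀ x ∈ r, x.2 ≠ i) ∧
    SoloBlocked IS s i rest

/-- Blocking type `P_i P_i`: the blocking prefix is `R₁ P_i R₂ P_i` with
    `R₂` free of `P_i, T_i`, deadlocking exactly before the last `P_i`. -/
def BlockingTypePP {k : ℕ} (IS : Store k) (s : List (LSym k)) (i : Fin k) : Prop :=
  ∃ r1 r2 rest, s = r1 ++ (LOp.put, i) :: r2 ++ (LOp.put, i) :: rest ∧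
    (∀ x ∈ r2, x.2 ≠ i) ∧ SoloBlocked IS s i rest

/-! Since `!✓ | ?0` is must-convergent, so is `τ(!)✓ | τ(?)0`, and any successful run of it
has finished `τ(!)`. Lock steps never inspect the end markers, so the same run, read in
`τ(!)0 | τ(?)✓`, finishes `τ(!)` there; must-convergence of `!0 | ?✓` then continues it until
`τ(?)` is finished as well, while the finished `τ(!)` stays. Renaming every end marker to `0`
turns the combined run into one of `τ(!)0 | τ(?)0`. -/

theorem Relation.ReflTransGen.invariant {α : Type*} {r : α → α → Prop} {p : α → Prop}
    (hp : ∀ a b, r a b → p a → p b) {a b : α} (hab : Relation.ReflTransGen r a b)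
    (ha : p a) : p b := by
  induction hab with
  | refl => exact ha
  | tail _ hbc ih => exact hp _ _ hbc ih

theorem SysStep.successful {P Q : SProc} (h : SysStep P Q) (hP : SSuccessful P) :
    SSuccessful Q := by
  obtain ⟨u1, u2, b1, b2, R, rfl, rfl⟩ := h
  simp_all [SSuccessful]

theorem SysStep.nil_mem_of_bang_ques {b1 b2 : Bool} {Q : SProc}
    (h : SysStep (([SSym.bang], b1) ::ₘ {([SSym.ques], b2)}) Q) :
    (([], b1) : SSub) ∈ Q ∧ (([], b2) : SSub) ∈ Q := by
  obtain ⟨u1, u2, c1, c2, R, hP, rfl⟩ := h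
  have h1 : ((SSym.bang :: u1, c1) : SSub) ∈ ([SSym.bang], b1) ::ₘ {([SSym.ques], b2)} := by
    simp [hP]
  have h2 : ((SSym.ques :: u2, c2) : SSub) ∈ ([SSym.bang], b1) ::ₘ {([SSym.ques], b2)} := by
    simp [hP]
  simp only [Multiset.mem_cons, Multiset.mem_singleton, Prod.mk.injEq, List.cons.injEq,
    reduceCtorEq, false_and, or_false, false_or] at h1 h2
  obtain ⟨⟨-, rfl⟩, rfl⟩ := h1
  obtain ⟨⟨-, rfl⟩, rfl⟩ := h2
  simp

theorem sMustConv_bang_ques {b1 b2 : Bool} (hb : (b1 || b2) = true) :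
    SMustConv (([SSym.bang], b1) ::ₘ {([SSym.ques], b2)}) := by
  have hsucc :
      ∀ Q, SysStep (([SSym.bang], b1) ::ₘ {([SSym.ques], b2)}) Q → SSuccessful Q := by
    intro Q hQ
    obtain ⟨h1, h2⟩ := hQ.nil_mem_of_bang_ques
    cases b1 <;> simp_all [SSuccessful]
  intro Q hQ
  rcases hQ.cases_head with rfl | ⟨Q', hQ', hrun⟩
  · have hstep : SysStep (([SSym.bang], b1) ::ₘ {([SSym.ques], b2)}) {([], b1), ([], b2)} :=
      ⟨[], [], b1, b2, 0, rfl, rfl⟩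
    exact ⟨_, .single hstep, hsucc _ hstep⟩
  · exact ⟨Q, .refl, hrun.invariant (fun _ _ h => h.successful) (hsucc Q' hQ')⟩

section LockSimple

variable {k : ℕ}

theorem LockStep.exists_cons {s t : LProc k × Store k} (h : LockStep s t) :
    ∃ c u b R, s.1 = (c :: u, b) ::ₘ R ∧ t.1 = (u, b) ::ₘ R := by
  obtain ⟨i, u, b, R, ⟨hs, -, ht, -⟩ | ⟨hs, ht, -⟩⟩ := h
  exacts [⟨_, u, b, R, hs, ht⟩, ⟨_, u, b, R, hs, ht⟩]

theorem LockStep.card_eq {s t : LProc k × Store k} (h : LockStep s t) :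
    Multiset.card s.1 = Multiset.card t.1 := by
  obtain ⟨c, u, b, R, hs, ht⟩ := h.exists_cons
  simp [hs, ht]

theorem LockStep.nil_mem {s t : LProc k × Store k} (h : LockStep s t) {b : Bool}
    (hs : (([], b) : LSub k) ∈ s.1) : (([], b) : LSub k) ∈ t.1 := by
  obtain ⟨c, u, b', R, hs', ht⟩ := h.exists_cons
  rw [hs', Multiset.mem_cons] at hs
  rcases hs with hs | hs
  · simp at hs
  · simp [ht, hs]

def relabelEnds (f : Bool → Bool) (s : LProc k × Store k) : LProc k × Store k :=
  (s.1.map (Prod.map id f), s.2)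

theorem LockStep.relabel (f : Bool → Bool) {s t : LProc k × Store k} (h : LockStep s t) :
    LockStep (relabelEnds f s) (relabelEnds f t) := by
  obtain ⟨i, u, b, R, h⟩ := h
  refine ⟨i, u, f b, R.map (Prod.map id f), ?_⟩
  rcases h with ⟨hs, hi, ht, hst⟩ | ⟨hs, ht, hst⟩
  · exact Or.inl ⟨by simp [relabelEnds, hs], hi, by simp [relabelEnds, ht], hst⟩
  · exact Or.inr ⟨by simp [relabelEnds, hs], by simp [relabelEnds, ht], hst⟩

theorem LockStep.reflTransGen_relabel (f : Bool → Bool) {s t : LProc k × Store k}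
    (h : Relation.ReflTransGen LockStep s t) :
    Relation.ReflTransGen LockStep (relabelEnds f s) (relabelEnds f t) :=
  h.lift (relabelEnds f) fun _ _ => LockStep.relabel f

theorem eq_pair_of_card_eq_two {α : Type*} {m : Multiset α} {a b : α}
    (hm : Multiset.card m = 2) (hab : a ≠ b) (ha : a ∈ m) (hb : b ∈ m) : m = {a, b} := by
  obtain ⟨x, y, rfl⟩ := Multiset.card_eq_two.1 hm
  simp only [Multiset.insert_eq_cons, Multiset.mem_cons, Multiset.mem_singleton] at ha hb
  rcases ha with rfl | rfl <;> rcases hb with rfl | rfl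
  exacts [absurd rfl hab, rfl, Multiset.pair_comm _ _, absurd rfl hab]

end LockSimple

/-- for a correct compositional translation with `k ≥ 1` locks, there
is a reduction sequence of `τ(!) | τ(?)` from the initial store that executes every
symbol of both `τ(!)` and `τ(?)`. -/
theorem full_execution_exists :
    ∀ (k : ℕ), 1 ≤ k → ∀ (IS : Store k) (tb tq : List (LSym k)),
      Correct IS tb tq →
      ∃ C : Store k,
        Relation.ReflTransGen LockStep
          (({(tb, false), (tq, false)} : LProc k), IS)
          (({(([] : List (LSym k)), false), (([] : List (LSym k)), false)} : LProc k), C) := by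
  intro k _ IS tb tq hcorr
  have must : ∀ b1 b2 : Bool, (b1 || b2) = true →
      LMustConv ((({(tb, b1), (tq, b2)} : LProc k), IS)) := fun b1 b2 hb => by
    simpa [transProc, transSub] using (hcorr _).2.1 (sMustConv_bang_ques hb)
  obtain ⟨t₁, run₁, succ₁⟩ := must true false rfl _ .refl
  have run₁' := LockStep.reflTransGen_relabel not run₁
  obtain ⟨t₂, run₂, succ₂⟩ := must false true rfl _ run₁'
  have done₂ : (([], false) : LSub k) ∈ t₂.1 :=
    run₂.invariant (p := fun s => (([], false) : LSub k) ∈ s.1) (fun _ _ h => h.nil_mem)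
      (Multiset.mem_map.2 ⟨_, succ₁, rfl⟩)
  have card₂ : Multiset.card t₂.1 = 2 :=
    (run₁'.trans run₂).invariant (p := fun s => Multiset.card s.1 = 2)
      (fun _ _ h hs => h.card_eq ▸ hs) rfl
  have ht₂ : t₂.1 = {([], false), ([], true)} :=
    eq_pair_of_card_eq_two card₂ (by simp) done₂ succ₂
  refine ⟨t₂.2, ?_⟩
  simpa [relabelEnds, ht₂] using
    LockStep.reflTransGen_relabel (fun _ => false) (run₁'.trans run₂)
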